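/- arXiv:2109.08107 — 8 statements merged into one kernel-verified Lean document; each statement's English description precedes it below -/
import Mathlib

section
/- The trace distance between the 3×3 density matrices ρ₀ = (a|0⟩+b|1⟩)(a⟨0|+b⟨1|) + c²|2⟩⟨2| and ρ₁ = (a|0⟩−b|1⟩)(a⟨0|−b⟨1|) + c²|2⟩⟨2|, where a,b,c ≥ 0 and a²+b²+c²=1, equals 2ab. -/
/-!
`ρ₀ - ρ₁` is `2ab` times the swap of `|0⟩` and `|1⟩`, so `(ρ₀ - ρ₁)ᴴ (ρ₀ - ρ₁)` has the positive
semidefinite square root `diag(2ab, 2ab, 0)`, whose trace is `4ab`. Uniqueness of positive square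
roots identifies it with the spectral square root in the definition of `traceDist`.
-/

open Matrix
open scoped ComplexOrder

/-- Trace distance `D(ρ,σ) = (1/2) Tr |ρ-σ|` where `|A| = √(AᴴA)`. -/
noncomputable def traceDist {n : Type*} [Fintype n] [DecidableEq n]
    (ρ σ : Matrix n n ℂ) : ℝ :=
  (1 / 2 : ℝ) * (((Matrix.posSemidef_conjTranspose_mul_self (ρ - σ)).1.eigenvectorUnitary.1 *
    diagonal (((↑) : ℝ → ℂ) ∘ (√·) ∘ (Matrix.posSemidef_conjTranspose_mul_self (ρ - σ)).1.eigenvalues) *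
    (star (Matrix.posSemidef_conjTranspose_mul_self (ρ - σ)).1.eigenvectorUnitary :
      Matrix n n ℂ)).trace).re

open scoped MatrixOrder

namespace Matrix

variable {n 𝕜 : Type*} [Fintype n] [DecidableEq n] [RCLike 𝕜]

theorem PosSemidef.sqrt_eq_eigenvectorUnitary_mul {A : Matrix n n 𝕜} (hA : A.PosSemidef) :
    CFC.sqrt A = hA.1.eigenvectorUnitary.1 *
      diagonal (((↑) : ℝ → 𝕜) ∘ (√·) ∘ hA.1.eigenvalues) * star hA.1.eigenvectorUnitary.1 := by
  rw [CFC.sqrt_eq_real_sqrt A hA.nonneg, cfcₙ_eq_cfc, hA.1.cfc_eq]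
  rfl

end Matrix

theorem traceDist_eq_half_re_trace_sqrt {n : Type*} [Fintype n] [DecidableEq n]
    (ρ σ : Matrix n n ℂ) :
    traceDist ρ σ = 1 / 2 * (CFC.sqrt ((ρ - σ)ᴴ * (ρ - σ))).trace.re := by
  rw [(posSemidef_conjTranspose_mul_self (ρ - σ)).sqrt_eq_eigenvectorUnitary_mul]
  rfl

theorem traceDist_eq_of_mul_self_eq {n : Type*} [Fintype n] [DecidableEq n]
    {ρ σ S : Matrix n n ℂ} (hS : S.PosSemidef) (hSS : S * S = (ρ - σ)ᴴ * (ρ - σ)) :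
    traceDist ρ σ = 1 / 2 * S.trace.re := by
  rw [traceDist_eq_half_re_trace_sqrt, CFC.sqrt_unique hSS hS.nonneg]

theorem stmt_2_general (a b c : ℝ) (ha : 0 ≤ a) (hb : 0 ≤ b)
    (ρ₀ ρ₁ : Matrix (Fin 3) (Fin 3) ℂ)
    (hρ₀ : ρ₀ = !![(a : ℂ) ^ 2, (a : ℂ) * b, 0;
                   (a : ℂ) * b, (b : ℂ) ^ 2, 0;
                   0, 0, (c : ℂ) ^ 2])
    (hρ₁ : ρ₁ = !![(a : ℂ) ^ 2, -((a : ℂ) * b), 0;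
                   -((a : ℂ) * b), (b : ℂ) ^ 2, 0;
                   0, 0, (c : ℂ) ^ 2]) :
    traceDist ρ₀ ρ₁ = 2 * (a * b) := by
  have hdiff : ρ₀ - ρ₁ = !![0, 2 * (a * b : ℂ), 0; 2 * (a * b : ℂ), 0, 0; 0, 0, 0] := by
    subst hρ₀ hρ₁
    ext i j
    fin_cases i <;> fin_cases j <;> simp <;> ring
  set S : Matrix (Fin 3) (Fin 3) ℂ := diagonal ![2 * (a * b : ℂ), 2 * (a * b : ℂ), 0]
  have hS : S.PosSemidef := by
    have hab : (0 : ℂ) ≤ 2 * (a * b : ℂ) := by exact_mod_cast by positivity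
    refine posSemidef_diagonal_iff.mpr fun i => ?_
    fin_cases i <;> simp [hab]
  have hSS : S * S = (ρ₀ - ρ₁)ᴴ * (ρ₀ - ρ₁) := by
    rw [hdiff]
    ext i j
    fin_cases i <;> fin_cases j <;> simp [S, mul_apply, Fin.sum_univ_three, map_ofNat]
  have htrace : S.trace = ((4 * (a * b) : ℝ) : ℂ) := by
    simp only [S, trace_fin_three, diagonal_apply_eq, cons_val_zero, cons_val_one, cons_val]
    push_cast
    ring
  rw [traceDist_eq_of_mul_self_eq hS hSS, htrace, Complex.ofReal_re]
  ring

theorem stmt_2 (a b c : ℝ) (ha : 0 ≤ a) (hb : 0 ≤ b) (hc : 0 ≤ c)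
    (h : a ^ 2 + b ^ 2 + c ^ 2 = 1)
    (ρ₀ ρ₁ : Matrix (Fin 3) (Fin 3) ℂ)
    (hρ₀ : ρ₀ = !![(a : ℂ) ^ 2, (a : ℂ) * b, 0;
                   (a : ℂ) * b, (b : ℂ) ^ 2, 0;
                   0, 0, (c : ℂ) ^ 2])
    (hρ₁ : ρ₁ = !![(a : ℂ) ^ 2, -((a : ℂ) * b), 0;
                   -((a : ℂ) * b), (b : ℂ) ^ 2, 0;
                   0, 0, (c : ℂ) ^ 2]) :
    traceDist ρ₀ ρ₁ = 2 * (a * b) :=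
  stmt_2_general a b c ha hb ρ₀ ρ₁ hρ₀ hρ₁
end

section
/- Define, for nonnegative reals A, B, C with A + B + C = 1, the quantities χ_y = −A·log₂A − B·log₂B + (A+B)·log₂(A+B), χ_r = −A·log₂A − C·log₂C + (A+C)·log₂(A+C) (with the convention 0·log₂0 = 0). Then χ_r ≤ 1 − B. -/
/-!
`χ_r` is `A + C` times the binary entropy, in bits, of the split `A : C`, hence at most
`A + C = 1 - B`. The one-bit entropy bound is midpoint concavity of `x ↦ -x log x`.
-/

open Real

lemma negMulLog_add_le (a c : ℝ) (ha : 0 ≤ a) (hc : 0 ≤ c) :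
    negMulLog a + negMulLog c ≤ negMulLog (a + c) + (a + c) * log 2 := by
  have hmid := concaveOn_negMulLog.2 (Set.mem_Ici.2 ha) (Set.mem_Ici.2 hc)
    (by norm_num : (0 : ℝ) ≤ 2⁻¹) (by norm_num : (0 : ℝ) ≤ 2⁻¹) (by norm_num)
  have hhalf : negMulLog ((a + c) * 2⁻¹) = (negMulLog (a + c) + (a + c) * log 2) / 2 := by
    rw [negMulLog_mul]
    simp only [negMulLog, log_inv]
    ring
  simp only [smul_eq_mul, ← mul_add, mul_comm (2⁻¹ : ℝ) (a + c), hhalf] at hmid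
  linarith

lemma neg_mul_logb_sub_mul_logb_add_le (a c : ℝ) (ha : 0 ≤ a) (hc : 0 ≤ c) :
    -(a * logb 2 a) - c * logb 2 c + (a + c) * logb 2 (a + c) ≤ a + c := by
  have hlog2 : 0 < log 2 := log_pos one_lt_two
  have hnat : -(a * logb 2 a) - c * logb 2 c + (a + c) * logb 2 (a + c)
      = (negMulLog a + negMulLog c - negMulLog (a + c)) / log 2 := by
    simp only [logb, negMulLog]
    ring
  rw [hnat, div_le_iff₀ hlog2]
  linarith [negMulLog_add_le a c ha hc]

theorem stmt_4_general (A B C : ℝ) (hA : 0 ≤ A) (hC : 0 ≤ C)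
    (hsum : A + B + C = 1)
    (χr : ℝ)
    (hχr : χr = -(A * Real.logb 2 A) - C * Real.logb 2 C
        + (A + C) * Real.logb 2 (A + C)) :
    χr ≤ 1 - B := by
  rw [hχr]
  linarith [neg_mul_logb_sub_mul_logb_add_le A C hA hC]

theorem stmt_4 (A B C : ℝ) (hA : 0 ≤ A) (hB : 0 ≤ B) (hC : 0 ≤ C)
    (hsum : A + B + C = 1)
    (χy χr : ℝ)
    (hχy : χy = -(A * Real.logb 2 A) - B * Real.logb 2 B
        + (A + B) * Real.logb 2 (A + B))
    (hχr : χr = -(A * Real.logb 2 A) - C * Real.logb 2 C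
        + (A + C) * Real.logb 2 (A + C)) :
    χr ≤ 1 - B :=
  stmt_4_general A B C hA hC hsum χr hχr
end

section
/- Let A, B, C be nonnegative reals with A + B + C = 1, and define χ_y = −A·log₂A − B·log₂B + (A+B)·log₂(A+B) and χ_r = −A·log₂A − C·log₂C + (A+C)·log₂(A+C) (with 0·log₂0 = 0). If δ = 1 − χ_r satisfies 0 ≤ δ < 1/2, then χ_y ≤ h(δ), where h(δ) = −(1−δ)·log₂(1−δ) − δ·log₂δ. -/
/-!
Work in nats, with `h` the binary entropy in nats. Grouping gives `χ_r · log 2 = (A + C) · h(A / (A + C)) ≤ (A + C) · log 2`, so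
`δ = 1 - χ_r ≥ 1 - (A + C) = B`. On the other hand `χ_y · log 2 ≤ h(B)` is, after cancelling
`-B log B`, the inequality `-A log A ≤ -(A + B) log (A + B) - (A + C) log (A + C)`, which holds by
concavity of `-x log x` because `(A + B, A + C)` lies between `A` and `1` and has the same sum.
Since `h` is increasing on `[0, 1/2]`, `h(B) ≤ h(δ)`.
-/

open Real

theorem ConcaveOn.map_add_map_le_of_add_eq {s : Set ℝ} {f : ℝ → ℝ} (hf : ConcaveOn ℝ s f)
    {a b x y : ℝ} (ha : a ∈ s) (hb : b ∈ s) (hx : a ≤ x) (hy : a ≤ y) (hxy : x + y = a + b) :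
    f a + f b ≤ f x + f y := by
  rcases (show a ≤ b by linarith).eq_or_lt with rfl | hab
  · obtain rfl : x = a := by linarith
    obtain rfl : y = x := by linarith
    rfl
  set θ := (b - x) / (b - a)
  have hθ : θ * (b - a) = b - x := div_mul_cancel₀ _ (sub_ne_zero.2 hab.ne')
  have hθ0 : 0 ≤ θ := div_nonneg (by linarith) (by linarith)
  have hθ1 : 0 ≤ 1 - θ := by
    rw [sub_nonneg, div_le_one (by linarith)]
    linarith
  have hfx := hf.2 ha hb hθ0 hθ1 (add_sub_cancel θ 1)
  have hfy := hf.2 ha hb hθ1 hθ0 (sub_add_cancel 1 θ)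
  have ex : θ • a + (1 - θ) • b = x := by
    simp only [smul_eq_mul]
    linear_combination -hθ
  have ey : (1 - θ) • a + θ • b = y := by
    simp only [smul_eq_mul]
    linear_combination hθ - hxy
  rw [ex] at hfx
  rw [ey] at hfy
  simp only [smul_eq_mul] at hfx hfy
  linarith

namespace Real

theorem negMulLog_add_negMulLog_sub_negMulLog_add (a c : ℝ) :
    negMulLog a + negMulLog c - negMulLog (a + c) = (a + c) * binEntropy (a / (a + c)) := by
  rcases eq_or_ne (a + c) 0 with hs | hs
  · obtain rfl : c = -a := by linarith
    simp [negMulLog]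
  set p := a / (a + c)
  have hap : a = (a + c) * p := (mul_div_cancel₀ a hs).symm
  have hcp : c = (a + c) * (1 - p) := by
    rw [mul_one_sub, ← hap]
    ring
  calc negMulLog a + negMulLog c - negMulLog (a + c)
      = negMulLog ((a + c) * p) + negMulLog ((a + c) * (1 - p)) - negMulLog (a + c) := by
        rw [← hap, ← hcp]
    _ = (a + c) * binEntropy p := by
        rw [negMulLog_mul, negMulLog_mul, binEntropy_eq_negMulLog_add_negMulLog_one_sub]
        ring

theorem negMulLog_add_negMulLog_sub_negMulLog_add_le {a c : ℝ} (hac : 0 ≤ a + c) :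
    negMulLog a + negMulLog c - negMulLog (a + c) ≤ (a + c) * log 2 := by
  rw [negMulLog_add_negMulLog_sub_negMulLog_add]
  exact mul_le_mul_of_nonneg_left binEntropy_le_log_two hac

theorem negMulLog_add_negMulLog_sub_negMulLog_add_le_binEntropy {A B C : ℝ}
    (hA : 0 ≤ A) (hB : 0 ≤ B) (hC : 0 ≤ C) (hsum : A + B + C = 1) :
    negMulLog A + negMulLog B - negMulLog (A + B) ≤ binEntropy B := by
  have hconc := concaveOn_negMulLog.map_add_map_le_of_add_eq (a := A) (b := 1)
    (x := A + B) (y := A + C) hA (Set.mem_Ici.2 zero_le_one) (by linarith) (by linarith) (by linarith)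
  rw [binEntropy_eq_negMulLog_add_negMulLog_one_sub, show 1 - B = A + C by linarith]
  rw [negMulLog_one] at hconc
  linarith

end Real

theorem stmt_5 (A B C : ℝ) (hA : 0 ≤ A) (hB : 0 ≤ B) (hC : 0 ≤ C)
    (hsum : A + B + C = 1)
    (χy χr : ℝ)
    (hχy : χy = -(A * Real.logb 2 A) - B * Real.logb 2 B
        + (A + B) * Real.logb 2 (A + B))
    (hχr : χr = -(A * Real.logb 2 A) - C * Real.logb 2 C
        + (A + C) * Real.logb 2 (A + C))
    (δ : ℝ) (hδ : δ = 1 - χr) (hδ0 : 0 ≤ δ) (hδ1 : δ < 1 / 2) :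
    χy ≤ -((1 - δ) * Real.logb 2 (1 - δ)) - δ * Real.logb 2 δ := by
  have hlog2 : 0 < log 2 := log_pos one_lt_two
  have in_nats (a c : ℝ) : -(a * logb 2 a) - c * logb 2 c + (a + c) * logb 2 (a + c)
      = (negMulLog a + negMulLog c - negMulLog (a + c)) / log 2 := by
    simp only [logb, negMulLog]
    ring
  have hBδ : B ≤ δ := by
    have : χr ≤ A + C := by
      rw [hχr, in_nats, div_le_iff₀ hlog2]
      exact negMulLog_add_negMulLog_sub_negMulLog_add_le (by positivity)
    linarith
  have hrhs : -((1 - δ) * logb 2 (1 - δ)) - δ * logb 2 δ = binEntropy δ / log 2 := by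
    rw [binEntropy_eq_negMulLog_add_negMulLog_one_sub]
    simp only [logb, negMulLog]
    ring
  rw [hχy, in_nats, hrhs]
  gcongr
  calc _ ≤ binEntropy B := negMulLog_add_negMulLog_sub_negMulLog_add_le_binEntropy hA hB hC hsum
    _ ≤ binEntropy δ :=
      binEntropy_strictMonoOn.monotoneOn ⟨hB, by linarith⟩ ⟨hδ0, by linarith⟩ hBδ
end

section
/- Let A, B, C be nonnegative reals with A + B + C = 1, and define χ_{y⊕r} = −B·log₂B − C·log₂C + (B+C)·log₂(B+C) and χ_y = −A·log₂A − B·log₂B + (A+B)·log₂(A+B) (with 0·log₂0 = 0). If δ' = 1 − χ_{y⊕r} satisfies 0 ≤ δ' < 1/2, then χ_y ≤ h(δ') where h is the binary entropy function h(x) = −(1−x)log₂(1−x) − x·log₂x. -/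
/-!
Work in nats with `negMulLog x = -x log x`, which is concave. Concavity at the midpoint gives
`χ_{y⊕r} ≤ B + C = 1 - A`, i.e. `A ≤ δ'`. Since `B ≤ A + B, B + C ≤ 1` and `(A + B) + (B + C) = B + 1`,
concavity also gives `negMulLog B ≤ negMulLog (A + B) + negMulLog (B + C)`, i.e. `χ_y ≤ h(A)`.
Finally `h` is increasing on `[0, 1/2]`.
-/

open Real Set

lemma ConcaveOn.add_le_add_of_add_eq {f : ℝ → ℝ} {s : Set ℝ} (hf : ConcaveOn ℝ s f)
    {a b x y : ℝ} (ha : a ∈ s) (hb : b ∈ s) (hx : x ∈ Icc a b) (hxy : x + y = a + b) :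
    f a + f b ≤ f x + f y := by
  rw [← segment_eq_Icc (hx.1.trans hx.2)] at hx
  obtain ⟨θ, η, hθ, hη, hθη, rfl⟩ := hx
  simp only [smul_eq_mul] at hxy ⊢
  have hy : y = η * a + θ * b := by linear_combination hxy - (a + b) * hθη
  have hfx := hf.2 ha hb hθ hη hθη
  have hfy := hf.2 ha hb hη hθ (by rw [add_comm, hθη])
  simp only [smul_eq_mul, ← hy] at hfx hfy
  linear_combination hfx + hfy - (f a + f b) * hθη

lemma negMulLog_add_negMulLog_le {x y : ℝ} (hx : 0 ≤ x) (hy : 0 ≤ y) :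
    negMulLog x + negMulLog y ≤ negMulLog (x + y) + (x + y) * log 2 := by
  have hmid := concaveOn_negMulLog.2 hx hy (by norm_num : (0 : ℝ) ≤ 2⁻¹)
    (by norm_num : (0 : ℝ) ≤ 2⁻¹) (by norm_num)
  have hhalf : negMulLog (2⁻¹ * x + 2⁻¹ * y) = 2⁻¹ * (negMulLog (x + y) + (x + y) * log 2) := by
    rw [← mul_add, mul_comm, negMulLog_mul]
    simp only [negMulLog, log_inv]
    ring
  simp only [smul_eq_mul, hhalf] at hmid
  linarith

lemma neg_mul_logb_sub_mul_logb_add_mul_logb_add (b x y : ℝ) :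
    -(x * logb b x) - y * logb b y + (x + y) * logb b (x + y) =
      (negMulLog x + negMulLog y - negMulLog (x + y)) / log b := by
  simp only [negMulLog, logb]; ring

lemma neg_one_sub_mul_logb_sub_mul_logb (b p : ℝ) :
    -((1 - p) * logb b (1 - p)) - p * logb b p = binEntropy p / log b := by
  simp only [binEntropy_eq_negMulLog_add_negMulLog_one_sub, negMulLog, logb]; ring

theorem stmt_6 (A B C : ℝ) (hA : 0 ≤ A) (hB : 0 ≤ B) (hC : 0 ≤ C)
    (hsum : A + B + C = 1)
    (χyr χy : ℝ)
    (hχyr : χyr = -(B * Real.logb 2 B) - C * Real.logb 2 C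
        + (B + C) * Real.logb 2 (B + C))
    (hχy : χy = -(A * Real.logb 2 A) - B * Real.logb 2 B
        + (A + B) * Real.logb 2 (A + B))
    (δ' : ℝ) (hδ : δ' = 1 - χyr) (hδ0 : 0 ≤ δ') (hδ1 : δ' < 1 / 2) :
    χy ≤ -((1 - δ') * Real.logb 2 (1 - δ')) - δ' * Real.logb 2 δ' := by
  have hlog2 : 0 < log 2 := log_pos one_lt_two
  rw [neg_mul_logb_sub_mul_logb_add_mul_logb_add] at hχyr hχy
  have hA_le : A ≤ δ' := by
    have hχyr_le : χyr ≤ B + C := by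
      rw [hχyr, div_le_iff₀ hlog2]
      linarith [negMulLog_add_negMulLog_le hB hC]
    linarith
  have hχy_le : χy ≤ binEntropy A / log 2 := by
    have hmaj := concaveOn_negMulLog.add_le_add_of_add_eq (mem_Ici.2 hB) (mem_Ici.2 zero_le_one)
      (x := A + B) (y := B + C) ⟨by linarith, by linarith⟩ (by linarith)
    rw [hχy, binEntropy_eq_negMulLog_add_negMulLog_one_sub, show 1 - A = B + C by linarith]
    gcongr
    linarith [negMulLog_one]
  have hmono : binEntropy A ≤ binEntropy δ' :=
    binEntropy_strictMonoOn.monotoneOn ⟨hA, by linarith⟩ ⟨hδ0, by linarith⟩ hA_le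
  rw [neg_one_sub_mul_logb_sub_mul_logb]
  exact hχy_le.trans (by gcongr)
end

section
/- The function f(t) = −2(1−2t)·log₂(1−2t) − 2t·log₂t + 2(1−t)·log₂(1−t), defined for t ∈ (0, 1/2), attains its maximum at t = (5−√5)/10, and the maximum value equals log₂(3+√5) − 1. -/
/-!
Measured in nats and halved, `f` becomes `g = halfHolevo`, a signed sum of values of
`η x = -x log x`. Its derivative `log ((1 - 2t)² / (t (1 - t)))` changes sign exactly where
`(1 - 2t)² - t (1 - t) = 5t² - 5t + 1` does, i.e. at `t₀ = (5 - √5)/10` inside `(0, 1/2)`. At a root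
of that quadratic `g t = log ((1 - t)/(1 - 2t))`, and at `t₀` this ratio is the golden ratio `φ`, so
the maximum of `f = 2g / log 2` is `log₂ φ² = log₂ (φ + 1) = log₂ (3 + √5) - 1`.
-/

open Real Set

open scoped goldenRatio

noncomputable def halfHolevo (t : ℝ) : ℝ :=
  negMulLog (1 - 2 * t) + negMulLog t - negMulLog (1 - t)

lemma hasDerivAt_halfHolevo {t : ℝ} (h₀ : t ≠ 0) (h₁ : 1 - 2 * t ≠ 0) (h₂ : 1 - t ≠ 0) :
    HasDerivAt halfHolevo (log ((1 - 2 * t) ^ 2) - log (t * (1 - t))) t := by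
  have d₁ := (hasDerivAt_negMulLog h₁).comp t (((hasDerivAt_id t).const_mul 2).const_sub 1)
  have d₂ := hasDerivAt_negMulLog h₀
  have d₃ := (hasDerivAt_negMulLog h₂).comp t ((hasDerivAt_id t).const_sub 1)
  refine ((d₁.add d₂).sub d₃).congr_deriv ?_
  rw [log_pow, log_mul h₀ h₂]
  push_cast
  ring

lemma halfHolevo_eq_log_div {t : ℝ} (h₀ : t ≠ 0) (h₂ : 1 - t ≠ 0)
    (hcrit : (1 - 2 * t) ^ 2 = t * (1 - t)) :
    halfHolevo t = log ((1 - t) / (1 - 2 * t)) := by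
  have h₁ : 1 - 2 * t ≠ 0 := fun h => mul_ne_zero h₀ h₂ (by rw [← hcrit, h]; ring)
  have hlog : 2 * log (1 - 2 * t) = log t + log (1 - t) := by
    rw [← log_mul h₀ h₂, ← hcrit, log_pow]
    simp
  rw [log_div h₂ h₁]
  simp only [halfHolevo, negMulLog]
  linear_combination t * hlog

lemma sq_one_sub_two_mul_sub_mul_one_sub (t : ℝ) :
    (1 - 2 * t) ^ 2 - t * (1 - t) = 5 * (t - (5 - √5) / 10) * (t - (5 + √5) / 10) := by
  ring_nf
  rw [sq_sqrt (by norm_num)]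
  ring

lemma five_sub_sqrt_five_div_ten_mem_Ioo : (5 - √5) / 10 ∈ Ioo (0 : ℝ) (1 / 2) := by
  have hs₀ : 0 < √5 := by positivity
  have hs₅ : √5 < 5 := by
    rw [sqrt_lt' (by norm_num)]
    norm_num
  constructor <;> linarith

lemma isMaxOn_halfHolevo : IsMaxOn halfHolevo (Ioo 0 (1 / 2)) ((5 - √5) / 10) := by
  have hmem := five_sub_sqrt_five_div_ten_mem_Ioo
  have hderiv : ∀ x ∈ Ioo (0 : ℝ) (1 / 2),
      HasDerivAt halfHolevo (log ((1 - 2 * x) ^ 2) - log (x * (1 - x))) x :=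
    fun x hx => hasDerivAt_halfHolevo hx.1.ne' (by linarith [hx.2]) (by linarith [hx.2])
  have hdiff : DifferentiableOn ℝ halfHolevo (Ioo 0 (1 / 2)) :=
    fun x hx => (hderiv x hx).differentiableAt.differentiableWithinAt
  refine isMaxOn_Ioo_of_deriv (hderiv _ hmem).continuousAt
    (hdiff.mono (Ioo_subset_Ioo_right hmem.2.le)) (hdiff.mono (Ioo_subset_Ioo_left hmem.1.le))
    (fun x hx => ?_) (fun x hx => ?_)
  · have hx' : x ∈ Ioo (0 : ℝ) (1 / 2) := ⟨hx.1, hx.2.trans hmem.2⟩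
    rw [(hderiv x hx').deriv, sub_nonneg]
    refine log_le_log (mul_pos hx.1 (by linarith [hx'.2])) ?_
    nlinarith [sq_one_sub_two_mul_sub_mul_one_sub x, mul_pos (sub_pos.2 hx.2)
      (by linarith [hx'.2, hmem.2] : 0 < (5 + √5) / 10 - x)]
  · have hx' : x ∈ Ioo (0 : ℝ) (1 / 2) := ⟨hmem.1.trans hx.1, hx.2⟩
    rw [(hderiv x hx').deriv, sub_nonpos]
    refine log_le_log (pow_pos (by linarith [hx.2]) 2) ?_
    nlinarith [sq_one_sub_two_mul_sub_mul_one_sub x, mul_pos (sub_pos.2 hx.1)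
      (by linarith [hx'.2, hmem.2] : 0 < (5 + √5) / 10 - x)]

lemma halfHolevo_five_sub_sqrt_five_div_ten : halfHolevo ((5 - √5) / 10) = log φ := by
  have hs : √5 ^ 2 = 5 := sq_sqrt (by norm_num)
  obtain ⟨h₀, h₁⟩ := five_sub_sqrt_five_div_ten_mem_Ioo
  rw [halfHolevo_eq_log_div h₀.ne' (by linarith) (by linear_combination hs / 20)]
  congr 1
  rw [div_eq_iff (by linarith)]
  linear_combination -hs / 10

theorem stmt_7 (f : ℝ → ℝ)
    (hf : ∀ t, f t = -(2 * ((1 - 2 * t) * Real.logb 2 (1 - 2 * t)))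
        - 2 * (t * Real.logb 2 t) + 2 * ((1 - t) * Real.logb 2 (1 - t))) :
    (∀ t, 0 < t → t < 1 / 2 → f t ≤ f ((5 - Real.sqrt 5) / 10)) ∧
      0 < (5 - Real.sqrt 5) / 10 ∧ (5 - Real.sqrt 5) / 10 < 1 / 2 ∧
      f ((5 - Real.sqrt 5) / 10) = Real.logb 2 (3 + Real.sqrt 5) - 1 := by
  have hf' : ∀ t, f t = 2 * halfHolevo t / log 2 := fun t => by
    rw [hf]
    simp only [halfHolevo, negMulLog, logb]
    ring
  have hlog₂ : 0 < log 2 := log_pos one_lt_two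
  obtain ⟨ht₀, ht₁⟩ := five_sub_sqrt_five_div_ten_mem_Ioo
  refine ⟨fun t h₀ h₁ => ?_, ht₀, ht₁, ?_⟩
  · rw [hf', hf']
    gcongr
    exact isMaxOn_halfHolevo ⟨h₀, h₁⟩
  · have hφ : 2 * log φ = log (3 + √5) - log 2 := by
      rw [← log_div (by positivity) (by norm_num), show (3 + √5) / 2 = φ ^ 2 by
        rw [goldenRatio_sq]; ring, log_pow]
      norm_num
    rw [hf', halfHolevo_five_sub_sqrt_five_div_ten, hφ, logb, sub_div, div_self hlog₂.ne']
end

section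
/- Let a, b, c, f, g, h, u, v, w be real numbers with f, g, h ≥ 0, u² ≤ fg, v² ≤ fh, w² ≤ gh, and a² + b² + c² = 1. Then (√3·ab·u)² + (√3·ac·v)² + (√3·bc·w)² ≤ (a²f + b²g + c²h)². -/
theorem stmt_10 (a b c f g h u v w : ℝ)
    (hf : 0 ≤ f) (hg : 0 ≤ g) (hh : 0 ≤ h)
    (hu : u ^ 2 ≤ f * g) (hv : v ^ 2 ≤ f * h) (hw : w ^ 2 ≤ g * h)
    (habc : a ^ 2 + b ^ 2 + c ^ 2 = 1) :
    (Real.sqrt 3 * (a * b) * u) ^ 2 + (Real.sqrt 3 * (a * c) * v) ^ 2 +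
        (Real.sqrt 3 * (b * c) * w) ^ 2 ≤
      (a ^ 2 * f + b ^ 2 * g + c ^ 2 * h) ^ 2 := by
  have h3 : Real.sqrt 3 ^ 2 = 3 := Real.sq_sqrt (by norm_num)
  have h1 : (a*b)^2 * u^2 ≤ (a*b)^2 * (f*g) :=
    mul_le_mul_of_nonneg_left hu (sq_nonneg _)
  have h2 : (a*c)^2 * v^2 ≤ (a*c)^2 * (f*h) :=
    mul_le_mul_of_nonneg_left hv (sq_nonneg _)
  have h4 : (b*c)^2 * w^2 ≤ (b*c)^2 * (g*h) :=
    mul_le_mul_of_nonneg_left hw (sq_nonneg _)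
  nlinarith [sq_nonneg (a^2*f - b^2*g), sq_nonneg (a^2*f - c^2*h), sq_nonneg (b^2*g - c^2*h)]
end

section
/- For any two unit vectors |ψ⟩, |φ⟩ in a finite-dimensional complex Hilbert space and any unit vector |χ⟩, the inequality |⟨ψ|φ⟩| ≤ |⟨ψ|χ⟩|·|⟨χ|φ⟩| + √(1−|⟨ψ|χ⟩|²)·√(1−|⟨χ|φ⟩|²) holds. -/
/-! Split `ψ` and `φ` into their components along `χ` and orthogonal to it. The inner product
`⟪ψ, φ⟫` is then `⟪ψ, χ⟫⟪χ, φ⟫` plus the inner product of the orthogonal parts, whose norms are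
`√(1 - |⟪ψ, χ⟫|²)` and `√(1 - |⟪χ, φ⟫|²)` by Pythagoras; the triangle and Cauchy–Schwarz
inequalities finish the proof. -/

open scoped InnerProductSpace

section UnitVector

variable {𝕜 E : Type*} [RCLike 𝕜] [NormedAddCommGroup E] [InnerProductSpace 𝕜 E]
  {χ : E}

theorem inner_sub_inner_smul_eq_zero_of_norm_eq_one (hχ : ‖χ‖ = 1) (x : E) :
    ⟪x - ⟪χ, x⟫_𝕜 • χ, χ⟫_𝕜 = 0 := by
  rw [inner_sub_left, inner_smul_left, inner_conj_symm, inner_self_eq_norm_sq_to_K, hχ]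
  simp

theorem norm_sub_inner_smul_sq_of_norm_eq_one (hχ : ‖χ‖ = 1) (x : E) :
    ‖x - ⟪χ, x⟫_𝕜 • χ‖ ^ 2 = ‖x‖ ^ 2 - ‖⟪χ, x⟫_𝕜‖ ^ 2 := by
  have hperp : ⟪x - ⟪χ, x⟫_𝕜 • χ, ⟪χ, x⟫_𝕜 • χ⟫_𝕜 = 0 := by
    rw [inner_smul_right, inner_sub_inner_smul_eq_zero_of_norm_eq_one hχ, mul_zero]
  have := norm_add_sq_eq_norm_sq_add_norm_sq_of_inner_eq_zero _ _ hperp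
  rw [sub_add_cancel, norm_smul, hχ, mul_one] at this
  linarith

theorem inner_eq_inner_mul_inner_add_inner_sub_smul (hχ : ‖χ‖ = 1) (x y : E) :
    ⟪x, y⟫_𝕜 = ⟪x, χ⟫_𝕜 * ⟪χ, y⟫_𝕜 + ⟪x - ⟪χ, x⟫_𝕜 • χ, y - ⟪χ, y⟫_𝕜 • χ⟫_𝕜 := by
  rw [inner_sub_right _ _ (⟪χ, y⟫_𝕜 • χ), inner_smul_right,
    inner_sub_inner_smul_eq_zero_of_norm_eq_one hχ, inner_sub_left, inner_smul_left,
    inner_conj_symm]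
  ring

theorem norm_inner_le_norm_inner_mul_norm_inner_add_sqrt_mul_sqrt (hχ : ‖χ‖ = 1) (x y : E) :
    ‖⟪x, y⟫_𝕜‖ ≤ ‖⟪x, χ⟫_𝕜‖ * ‖⟪χ, y⟫_𝕜‖ +
      √(‖x‖ ^ 2 - ‖⟪x, χ⟫_𝕜‖ ^ 2) * √(‖y‖ ^ 2 - ‖⟪χ, y⟫_𝕜‖ ^ 2) := by
  have hnorm (z : E) : ‖z - ⟪χ, z⟫_𝕜 • χ‖ = √(‖z‖ ^ 2 - ‖⟪z, χ⟫_𝕜‖ ^ 2) := by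
    rw [← norm_inner_symm, ← norm_sub_inner_smul_sq_of_norm_eq_one hχ,
      Real.sqrt_sq (norm_nonneg _)]
  calc ‖⟪x, y⟫_𝕜‖
      = ‖⟪x, χ⟫_𝕜 * ⟪χ, y⟫_𝕜 + ⟪x - ⟪χ, x⟫_𝕜 • χ, y - ⟪χ, y⟫_𝕜 • χ⟫_𝕜‖ := by
        rw [← inner_eq_inner_mul_inner_add_inner_sub_smul hχ]
    _ ≤ ‖⟪x, χ⟫_𝕜‖ * ‖⟪χ, y⟫_𝕜‖ + ‖x - ⟪χ, x⟫_𝕜 • χ‖ * ‖y - ⟪χ, y⟫_𝕜 • χ‖ :=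
        (norm_add_le _ _).trans (by rw [norm_mul]; gcongr; exact norm_inner_le_norm _ _)
    _ = _ := by rw [hnorm, hnorm y, norm_inner_symm y]

end UnitVector

theorem stmt_13_general {E : Type*} [NormedAddCommGroup E] [InnerProductSpace ℂ E]
    (ψ φ χ : E) (hψ : ‖ψ‖ = 1) (hφ : ‖φ‖ = 1) (hχ : ‖χ‖ = 1) :
    ‖⟪ψ, φ⟫_ℂ‖ ≤ ‖⟪ψ, χ⟫_ℂ‖ * ‖⟪χ, φ⟫_ℂ‖ +
      Real.sqrt (1 - ‖⟪ψ, χ⟫_ℂ‖ ^ 2) * Real.sqrt (1 - ‖⟪χ, φ⟫_ℂ‖ ^ 2) := by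
  simpa [hψ, hφ] using norm_inner_le_norm_inner_mul_norm_inner_add_sqrt_mul_sqrt hχ ψ φ

theorem stmt_13 {E : Type*} [NormedAddCommGroup E] [InnerProductSpace ℂ E]
    [FiniteDimensional ℂ E]
    (ψ φ χ : E) (hψ : ‖ψ‖ = 1) (hφ : ‖φ‖ = 1) (hχ : ‖χ‖ = 1) :
    ‖⟪ψ, φ⟫_ℂ‖ ≤ ‖⟪ψ, χ⟫_ℂ‖ * ‖⟪χ, φ⟫_ℂ‖ +
      Real.sqrt (1 - ‖⟪ψ, χ⟫_ℂ‖ ^ 2) * Real.sqrt (1 - ‖⟪χ, φ⟫_ℂ‖ ^ 2) :=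
  stmt_13_general ψ φ χ hψ hφ hχ
end

section
/- Let H_A ⊗ H_B be a finite-dimensional bipartite Hilbert space and let |ξ⟩ = Σ_j f_j |a_j⟩⊗|b_j⟩ be a Schmidt decomposition (f_j > 0, Σ f_j² = 1, {a_j}, {b_j} orthonormal). Let |τ⟩ ∈ H_A be a unit vector with ⟨τ| Tr_B(|ξ⟩⟨ξ|) |τ⟩ ≥ 1 − 2δ for some δ ∈ (0, 0.1). Then there exists a unique index ĵ with |⟨a_ĵ|τ⟩| ≥ √(1−2δ), and moreover f_ĵ² ≥ 1 − 2δ. -/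
open scoped InnerProductSpace

/-- Schmidt-decomposition form of `⟨τ| Tr_B(|ξ⟩⟨ξ|) |τ⟩ ≥ 1 - 2δ`:
for `|ξ⟩ = Σ_j f_j |a_j⟩⊗|b_j⟩` with `{a_j}` orthonormal, the overlap is
`Σ_j f_j² |⟨a_j|τ⟩|²`. There is a unique index `ĵ` with
`|⟨a_ĵ|τ⟩| ≥ √(1-2δ)`, and for it `f_ĵ² ≥ 1-2δ`. -/
theorem stmt_15 {E : Type*} [NormedAddCommGroup E] [InnerProductSpace ℂ E]
    [FiniteDimensional ℂ E]
    {ι : Type*} [Fintype ι]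
    (f : ι → ℝ) (hf : ∀ j, 0 < f j) (hf1 : ∑ j, (f j) ^ 2 = 1)
    (a : ι → E) (ha : Orthonormal ℂ a)
    (τ : E) (hτ : ‖τ‖ = 1)
    (δ : ℝ) (hδ0 : 0 < δ) (hδ1 : δ < 0.1)
    (hover : 1 - 2 * δ ≤ ∑ j, (f j) ^ 2 * ‖⟪a j, τ⟫_ℂ‖ ^ 2) :
    (∃! j : ι, Real.sqrt (1 - 2 * δ) ≤ ‖⟪a j, τ⟫_ℂ‖) ∧
      ∀ j : ι, Real.sqrt (1 - 2 * δ) ≤ ‖⟪a j, τ⟫_ℂ‖ → 1 - 2 * δ ≤ (f j) ^ 2 := by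
  classical
  set g : ι → ℝ := fun j => ‖⟪a j, τ⟫_ℂ‖ ^ 2 with hg
  have hpos : (0:ℝ) < 1 - 2 * δ := by linarith
  have hbessel : ∀ s : Finset ι, ∑ j ∈ s, g j ≤ 1 := by
    intro s
    have := ha.sum_inner_products_le (s := s) τ
    rwa [hτ, one_pow] at this
  have hg0 : ∀ j, 0 ≤ g j := fun j => sq_nonneg _
  have hgle1 : ∀ j, g j ≤ 1 := by
    intro j
    have := hbessel {j}
    simpa using this
  -- translate the hypothesis: `√(1-2δ) ≤ ‖⟪a j, τ⟫‖ ↔ 1-2δ ≤ g j`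
  have hiff : ∀ j, Real.sqrt (1 - 2*δ) ≤ ‖⟪a j, τ⟫_ℂ‖ ↔ 1 - 2*δ ≤ g j := by
    intro j
    rw [hg]
    constructor
    · intro h
      have h2 : Real.sqrt (1 - 2*δ) ^ 2 ≤ ‖⟪a j, τ⟫_ℂ‖ ^ 2 :=
        pow_le_pow_left₀ (Real.sqrt_nonneg _) h 2
      rwa [Real.sq_sqrt hpos.le] at h2
    · intro h
      have := Real.sqrt_le_sqrt h
      rwa [Real.sqrt_sq (norm_nonneg _)] at this
  -- existence
  have hex : ∃ j, 1 - 2*δ ≤ g j := by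
    by_contra hcon
    push_neg at hcon
    have hne : (Finset.univ : Finset ι).Nonempty := by
      rcases (Finset.univ : Finset ι).eq_empty_or_nonempty with h | h
      · exfalso
        rw [h, Finset.sum_empty] at hover
        linarith
      · exact h
    have : ∑ j, (f j)^2 * g j < ∑ j, (f j)^2 * (1 - 2*δ) := by
      apply Finset.sum_lt_sum_of_nonempty hne
      intro j _
      exact mul_lt_mul_of_pos_left (hcon j) (pow_pos (hf j) 2)
    rw [← Finset.sum_mul, hf1, one_mul] at this
    exact absurd hover (by exact not_le.mpr this)
  obtain ⟨j0, hj0⟩ := hex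
  -- uniqueness
  have huniq : ∀ j k, 1 - 2*δ ≤ g j → 1 - 2*δ ≤ g k → j = k := by
    intro j k hj hk
    by_contra hne
    have : g j + g k ≤ 1 := by
      have := hbessel {j, k}
      rwa [Finset.sum_insert (by simpa using hne), Finset.sum_singleton] at this
    linarith
  refine ⟨⟨j0, (hiff j0).mpr hj0, fun k hk => huniq k j0 ((hiff k).mp hk) hj0⟩, ?_⟩
  -- main bound
  intro j hj
  have hgj : 1 - 2*δ ≤ g j := (hiff j).mp hj
  have hsplit : ∑ k, (f k)^2 * g k
      = (f j)^2 * g j + ∑ k ∈ Finset.univ.erase j, (f k)^2 * g k := by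
    rw [← Finset.add_sum_erase _ _ (Finset.mem_univ j)]
  have hfsplit : (f j)^2 + ∑ k ∈ Finset.univ.erase j, (f k)^2 = 1 := by
    rw [← Finset.add_sum_erase _ _ (Finset.mem_univ j)] at hf1
    exact hf1
  have hrest_f : ∀ k ∈ Finset.univ.erase j, (f k)^2 ≤ 1 - (f j)^2 := by
    intro k hk
    have : (f k)^2 ≤ ∑ m ∈ Finset.univ.erase j, (f m)^2 :=
      Finset.single_le_sum (fun m _ => sq_nonneg (f m)) hk
    linarith
  have hrest_g : ∑ k ∈ Finset.univ.erase j, g k ≤ 1 - g j := by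
    have h1 := hbessel Finset.univ
    rw [← Finset.add_sum_erase _ _ (Finset.mem_univ j)] at h1
    linarith
  have hx1 : 0 ≤ 1 - (f j)^2 := by
    have := Finset.sum_nonneg (s := Finset.univ.erase j)
      (fun m (_ : m ∈ Finset.univ.erase j) => sq_nonneg (f m))
    linarith
  have hbound : ∑ k ∈ Finset.univ.erase j, (f k)^2 * g k ≤ (1 - (f j)^2) * (1 - g j) := by
    calc ∑ k ∈ Finset.univ.erase j, (f k)^2 * g k
        ≤ ∑ k ∈ Finset.univ.erase j, (1 - (f j)^2) * g k := by
          apply Finset.sum_le_sum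
          intro k hk
          exact mul_le_mul_of_nonneg_right (hrest_f k hk) (hg0 k)
      _ = (1 - (f j)^2) * ∑ k ∈ Finset.univ.erase j, g k := by
          rw [Finset.mul_sum]
      _ ≤ (1 - (f j)^2) * (1 - g j) := mul_le_mul_of_nonneg_left hrest_g hx1
  have hkey : 1 - 2*δ ≤ (f j)^2 * g j + (1 - (f j)^2) * (1 - g j) := by
    rw [show (∑ k, (f k)^2 * ‖⟪a k, τ⟫_ℂ‖^2) = ∑ k, (f k)^2 * g k from rfl, hsplit] at hover
    linarith
  nlinarith [hgle1 j, hgj, sq_nonneg (f j)]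
end
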